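/- arXiv:1801.07722 — 8 statements merged into one kernel-verified Lean document; each statement's English description precedes it below -/
import Mathlib

section
/- Let x : V → ℝ≥0 and P : V → V → ℝ with 0 ≤ P(u,v) ≤ 1 and ∑_v P(u,v) = 1 for all u. For S ⊆ V define ρ(u,S) = ∑_{v∈S} P(u,v), and assume ρ(u,S) < 1 for all u. Then ∑_{u∈V} x(u)(1-ρ(u,S)) ∑_{v∈V∖S} (P(u,v)/(1-ρ(u,S)))(1 - P(u,v)/(1-ρ(u,S))) ≤ ∑_{u∈V} x(u) ∑_{v∈V} P(u,v)(1-P(u,v)). That is, the expected uncertainty after monitoring the nodes in S (ParentTransitions queries) is at most the initial uncertainty F₀. -/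
/-!
Row by row: conditioning a row `P u` on leaving `S` rescales it by `c = 1 - ρ(u,S) ∈ (0,1]`, and
`c · (p/c)(1 - p/c) = p - p²/c ≤ p - p²`, so each surviving term only shrinks; the terms over `S`
that are dropped are nonnegative.
-/

open Finset

lemma mul_div_mul_one_sub_div_le {c p : ℝ} (hc0 : 0 < c) (hc1 : c ≤ 1) :
    c * (p / c * (1 - p / c)) ≤ p * (1 - p) := by
  have hsq : p ^ 2 ≤ p ^ 2 / c := le_div_self (sq_nonneg p) hc0 hc1
  calc c * (p / c * (1 - p / c)) = p - p ^ 2 / c := by field_simp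
    _ ≤ p - p ^ 2 := by linarith
    _ = p * (1 - p) := by ring

lemma mul_sum_sdiff_conditioned_variance_le {ι : Type*} [Fintype ι] [DecidableEq ι]
    (p : ι → ℝ) (hp0 : ∀ v, 0 ≤ p v) (hp1 : ∀ v, p v ≤ 1)
    (S : Finset ι) (hS : ∑ v ∈ S, p v < 1) :
    (1 - ∑ w ∈ S, p w) *
        ∑ v ∈ univ \ S, p v / (1 - ∑ w ∈ S, p w) * (1 - p v / (1 - ∑ w ∈ S, p w))
      ≤ ∑ v, p v * (1 - p v) := by
  have hρ0 : 0 ≤ ∑ w ∈ S, p w := sum_nonneg fun v _ => hp0 v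
  calc _ ≤ ∑ v ∈ univ \ S, p v * (1 - p v) := by
        rw [mul_sum]
        exact sum_le_sum fun v _ => mul_div_mul_one_sub_div_le (by linarith) (by linarith)
    _ ≤ ∑ v, p v * (1 - p v) :=
        sum_le_sum_of_subset_of_nonneg sdiff_subset fun v _ _ =>
          mul_nonneg (hp0 v) (sub_nonneg.mpr (hp1 v))

theorem parentTransitions_decreases_uncertainty_general
    {V : Type*} [Fintype V] [DecidableEq V]
    (x : V → ℝ) (hx : ∀ u, 0 ≤ x u)
    (P : V → V → ℝ) (hP0 : ∀ u v, 0 ≤ P u v) (hP1 : ∀ u v, P u v ≤ 1)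
    (S : Finset V) (hρ : ∀ u, ∑ v ∈ S, P u v < 1) :
    ∑ u, x u * (1 - ∑ v ∈ S, P u v) *
        ∑ v ∈ univ \ S,
          (P u v / (1 - ∑ w ∈ S, P u w)) * (1 - P u v / (1 - ∑ w ∈ S, P u w))
      ≤ ∑ u, x u * ∑ v, P u v * (1 - P u v) :=
  sum_le_sum fun u _ => by
    rw [mul_assoc]
    exact mul_le_mul_of_nonneg_left
      (mul_sum_sdiff_conditioned_variance_le (P u) (hP0 u) (hP1 u) S (hρ u)) (hx u)

theorem parentTransitions_decreases_uncertainty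
    {V : Type*} [Fintype V] [DecidableEq V]
    (x : V → ℝ) (hx : ∀ u, 0 ≤ x u)
    (P : V → V → ℝ) (hP0 : ∀ u v, 0 ≤ P u v) (hP1 : ∀ u v, P u v ≤ 1)
    (hrow : ∀ u, ∑ v, P u v = 1)
    (S : Finset V) (hρ : ∀ u, ∑ v ∈ S, P u v < 1) :
    ∑ u, x u * (1 - ∑ v ∈ S, P u v) *
        ∑ v ∈ univ \ S,
          (P u v / (1 - ∑ w ∈ S, P u w)) * (1 - P u v / (1 - ∑ w ∈ S, P u w))
      ≤ ∑ u, x u * ∑ v, P u v * (1 - P u v) :=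
  parentTransitions_decreases_uncertainty_general x hx P hP0 hP1 S hρ
end

section
/- Let p₀, p₁ ∈ [0,1] with p₀ ≤ p₁, and let C be a finite multiset of nonnegative reals. Set S = ∑_{p∈C} p and SS = ∑_{p∈C} p². Define f on finite multisets of nonnegative reals with positive sum by f(M) = (∑_{p∈M} p) − (∑_{p∈M} p²)/(∑_{p∈M} p). If S + p₀ > 0 and S + p₁ > 0, then f({p₀} ∪ C) − f({p₁} ∪ C) = −(p₁ − p₀)(SS + S²)/((S+p₀)(S+p₁)) ≤ 0. In particular, among remaining-edge sets differing in one element, keeping the smaller probability yields the smaller (better) objective value. -/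
/- With `S = ∑ C` and `Q = ∑_{p ∈ C} p²`, splitting `p² = (S + p)² - 2S(S + p) + S²` gives
`edgeObj (p ::ₘ C) = 2S - (Q + S²)/(S + p)`. Hence the difference of the two objectives is
`(Q + S²)(1/(S + p₁) - 1/(S + p₀))`, which is nonpositive when `p₀ ≤ p₁`. -/

/-- The single-node objective on a multiset of remaining edge probabilities. -/
noncomputable def edgeObj (M : Multiset ℝ) : ℝ :=
  M.sum - (M.map (fun p => p ^ 2)).sum / M.sum

theorem edgeObj_cons (p : ℝ) (C : Multiset ℝ) (h : C.sum + p ≠ 0) :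
    edgeObj (p ::ₘ C) =
      2 * C.sum - ((C.map (fun p => p ^ 2)).sum + C.sum ^ 2) / (C.sum + p) := by
  rw [edgeObj, Multiset.map_cons, Multiset.sum_cons, Multiset.sum_cons, add_comm p]
  field_simp
  ring

theorem exchange_lemma_general (p₀ p₁ : ℝ) (h01 : p₀ ≤ p₁)
    (C : Multiset ℝ)
    (hS0 : 0 < C.sum + p₀) (hS1 : 0 < C.sum + p₁) :
    edgeObj (p₀ ::ₘ C) - edgeObj (p₁ ::ₘ C)
        = -(p₁ - p₀) * ((C.map (fun p => p ^ 2)).sum + C.sum ^ 2) /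
            ((C.sum + p₀) * (C.sum + p₁)) ∧
      edgeObj (p₀ ::ₘ C) - edgeObj (p₁ ::ₘ C) ≤ 0 := by
  have hQ : 0 ≤ (C.map (fun p => p ^ 2)).sum :=
    Multiset.sum_nonneg fun _ hx ↦ by
      obtain ⟨p, -, rfl⟩ := Multiset.mem_map.mp hx
      positivity
  have hdiff : edgeObj (p₀ ::ₘ C) - edgeObj (p₁ ::ₘ C)
      = -(p₁ - p₀) * ((C.map (fun p => p ^ 2)).sum + C.sum ^ 2) /
          ((C.sum + p₀) * (C.sum + p₁)) := by
    rw [edgeObj_cons p₀ C hS0.ne', edgeObj_cons p₁ C hS1.ne']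
    field_simp
    ring
  refine ⟨hdiff, hdiff ▸ div_nonpos_of_nonpos_of_nonneg ?_ (by positivity)⟩
  exact mul_nonpos_of_nonpos_of_nonneg (by linarith) (by positivity)

theorem exchange_lemma (p₀ p₁ : ℝ) (hp₀ : 0 ≤ p₀) (hp₁ : p₁ ≤ 1) (h01 : p₀ ≤ p₁)
    (hp₀1 : p₀ ≤ 1) (hp₁0 : 0 ≤ p₁)
    (C : Multiset ℝ) (hC : ∀ p ∈ C, 0 ≤ p)
    (hS0 : 0 < C.sum + p₀) (hS1 : 0 < C.sum + p₁) :
    edgeObj (p₀ ::ₘ C) - edgeObj (p₁ ::ₘ C)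
        = -(p₁ - p₀) * ((C.map (fun p => p ^ 2)).sum + C.sum ^ 2) /
            ((C.sum + p₀) * (C.sum + p₁)) ∧
      edgeObj (p₀ ::ₘ C) - edgeObj (p₁ ::ₘ C) ≤ 0 :=
  exchange_lemma_general p₀ p₁ h01 C hS0 hS1
end

section
/- Let a node u have outgoing transition probabilities p₁ ≥ p₂ ≥ ... ≥ p_n ≥ 0 with ∑ p_i = 1. For a subset D ⊆ {1,...,n} with |D| = m < n and ∑_{i∈D} p_i < 1, define g(D) = (1 − ρ(D)) ∑_{i∉D} (p_i/(1−ρ(D)))(1 − p_i/(1−ρ(D))) where ρ(D) = ∑_{i∈D} p_i. Then g is minimized over all subsets of size m by D* = {1,...,m}, the set of m largest probabilities. -/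
/-!
Write `C` for the set of unmonitored edges, so that `g = s - Q / s` with `s = ∑_{i ∈ C} p i = 1 - ρ(D)`
and `Q = ∑_{i ∈ C} (p i)²`. Singling out one `x = p i` with `i ∈ C`, and writing `r`, `q` for the sum
and the sum of squares of the other weights in `C`, this becomes `g = 2r - (r² + q) / (x + r)`,
which is nondecreasing in `x`. Hence exchanging an unmonitored edge for a lighter one never
increases `g`, and finitely many such exchanges turn any `D` into the top-`m` set.
-/

open Finset

theorem Finset.le_of_forall_exchange_le {α β : Type*} [DecidableEq α] [Preorder β]
    {F : Finset α → β} {T : Finset α}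
    (hswap : ∀ C : Finset α, C.card = T.card →
      ∀ i ∈ T \ C, ∀ j ∈ C \ T, F (insert i (C.erase j)) ≤ F C) :
    ∀ C : Finset α, C.card = T.card → F T ≤ F C := by
  intro C hC
  induction hk : (C \ T).card generalizing C with
  | zero =>
    have hCT : C ⊆ T := sdiff_eq_empty_iff_subset.1 (card_eq_zero.1 hk)
    rw [eq_of_subset_of_card_le hCT hC.ge]
  | succ k ih =>
    have hk' : (T \ C).card = k + 1 := (card_sdiff_comm hC).symm.trans hk
    obtain ⟨j, hj⟩ := card_pos.1 (by omega : 0 < (C \ T).card)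
    obtain ⟨i, hi⟩ := card_pos.1 (by omega : 0 < (T \ C).card)
    have hjC := (mem_sdiff.1 hj).1
    have hiC : i ∉ C.erase j := fun h => (mem_sdiff.1 hi).2 (mem_of_mem_erase h)
    have hcard : (insert i (C.erase j)).card = T.card := by
      rw [card_insert_of_notMem hiC, card_erase_add_one hjC, hC]
    have hdiff : (insert i (C.erase j) \ T).card = k := by
      rw [insert_sdiff_of_mem _ (mem_sdiff.1 hi).1, erase_sdiff_comm, card_erase_of_mem hj, hk,
        Nat.add_sub_cancel]
    exact (ih _ hcard hdiff).trans (hswap C hC i hi j hj)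

lemma add_sub_sq_add_div_add_mono {r q x y : ℝ} (hr : 0 ≤ r) (hq : 0 ≤ q) (hqr : q ≤ r ^ 2)
    (hx : 0 ≤ x) (hxy : x ≤ y) :
    x + r - (x ^ 2 + q) / (x + r) ≤ y + r - (y ^ 2 + q) / (y + r) := by
  rcases hr.eq_or_lt with rfl | hr
  · have hq0 : q = 0 := by nlinarith
    simp [hq0, sq]
  · have hform (z : ℝ) (hz : 0 < z + r) :
        z + r - (z ^ 2 + q) / (z + r) = 2 * r - (r ^ 2 + q) / (z + r) := by
      field_simp
      ring
    rw [hform x (by linarith), hform y (by linarith)]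
    gcongr

section Residual

variable {ι : Type*} (p : ι → ℝ)

/-- The paper's `g(D)` is `residualUncertainty p (univ \ D)`; when `C` carries no mass the
division by zero makes it `0`, as is `g(D) = 0 * _`. -/
noncomputable def residualUncertainty (C : Finset ι) : ℝ :=
  ∑ i ∈ C, p i - (∑ i ∈ C, p i ^ 2) / ∑ i ∈ C, p i

lemma sum_mul_sum_div_mul_one_sub_div_eq_residualUncertainty (C : Finset ι) :
    (∑ i ∈ C, p i) * ∑ i ∈ C, p i / (∑ j ∈ C, p j) * (1 - p i / ∑ j ∈ C, p j) =
      residualUncertainty p C := by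
  unfold residualUncertainty
  set s := ∑ i ∈ C, p i
  rcases eq_or_ne s 0 with h0 | h0
  · simp [h0]
  · have hterm (i : ι) : s * (p i / s * (1 - p i / s)) = p i - p i ^ 2 / s := by
      field_simp
    rw [mul_sum, sum_congr rfl fun i _ => hterm i, sum_sub_distrib, ← sum_div]

variable {p} [DecidableEq ι]

lemma residualUncertainty_insert_erase_le (hp : ∀ k, 0 ≤ p k) {C : Finset ι} {i j : ι}
    (hi : i ∈ C) (hj : j ∉ C) (hji : p j ≤ p i) :
    residualUncertainty p (insert j (C.erase i)) ≤ residualUncertainty p C := by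
  have hj' : j ∉ C.erase i := fun h => hj (mem_of_mem_erase h)
  unfold residualUncertainty
  rw [sum_insert hj', sum_insert hj', ← add_sum_erase C _ hi, ← add_sum_erase C _ hi]
  exact add_sub_sq_add_div_add_mono (sum_nonneg fun k _ => hp k)
    (sum_nonneg fun k _ => sq_nonneg (p k)) (sum_sq_le_sq_sum_of_nonneg fun k _ => hp k)
    (hp j) hji

end Residual

theorem single_node_top_m_optimal_general {n : ℕ} (p : Fin n → ℝ)
    (hnonneg : ∀ i, 0 ≤ p i)
    (hsorted : ∀ i j : Fin n, i ≤ j → p j ≤ p i)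
    (hsum : ∑ i, p i = 1)
    (m : ℕ)
    (D : Finset (Fin n)) (hcard : D.card = m) :
    (1 - ∑ i ∈ univ.filter (fun i : Fin n => (i : ℕ) < m), p i) *
        ∑ i ∈ univ.filter (fun i : Fin n => ¬ (i : ℕ) < m),
          (p i / (1 - ∑ j ∈ univ.filter (fun j : Fin n => (j : ℕ) < m), p j)) *
            (1 - p i / (1 - ∑ j ∈ univ.filter (fun j : Fin n => (j : ℕ) < m), p j))
      ≤ (1 - ∑ i ∈ D, p i) *
        ∑ i ∈ univ \ D,
          (p i / (1 - ∑ j ∈ D, p j)) * (1 - p i / (1 - ∑ j ∈ D, p j)) := by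
  set top := univ.filter (fun i : Fin n => (i : ℕ) < m)
  have hcompl (S : Finset (Fin n)) : 1 - ∑ i ∈ S, p i = ∑ i ∈ univ \ S, p i := by
    rw [sum_sdiff_eq_sub (subset_univ S), hsum]
  rw [filter_not, hcompl, hcompl, sum_mul_sum_div_mul_one_sub_div_eq_residualUncertainty,
    sum_mul_sum_div_mul_one_sub_div_eq_residualUncertainty]
  refine le_of_forall_exchange_le (fun C _ i hi j hj => ?_) (univ \ D) ?_
  · have hij : (j : ℕ) < m ∧ ¬ (i : ℕ) < m := by simp_all [top]
    exact residualUncertainty_insert_erase_le hnonneg (mem_sdiff.1 hj).1 (mem_sdiff.1 hi).2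
      (hsorted j i (Fin.le_def.2 (by omega)))
  · have hm : m ≤ n := by simpa [hcard] using card_le_univ D
    rw [card_sdiff_of_subset (subset_univ D), card_sdiff_of_subset (subset_univ top),
      Fin.card_filter_val_lt, hcard, card_univ, Fintype.card_fin, min_eq_right hm]

theorem single_node_top_m_optimal {n : ℕ} (p : Fin n → ℝ)
    (hnonneg : ∀ i, 0 ≤ p i)
    (hsorted : ∀ i j : Fin n, i ≤ j → p j ≤ p i)
    (hsum : ∑ i, p i = 1)
    (m : ℕ) (hm : m < n)
    (D : Finset (Fin n)) (hcard : D.card = m) (hρ : ∑ i ∈ D, p i < 1) :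
    (1 - ∑ i ∈ univ.filter (fun i : Fin n => (i : ℕ) < m), p i) *
        ∑ i ∈ univ.filter (fun i : Fin n => ¬ (i : ℕ) < m),
          (p i / (1 - ∑ j ∈ univ.filter (fun j : Fin n => (j : ℕ) < m), p j)) *
            (1 - p i / (1 - ∑ j ∈ univ.filter (fun j : Fin n => (j : ℕ) < m), p j))
      ≤ (1 - ∑ i ∈ D, p i) *
        ∑ i ∈ univ \ D,
          (p i / (1 - ∑ j ∈ D, p j)) * (1 - p i / (1 - ∑ j ∈ D, p j)) :=
  single_node_top_m_optimal_general p hnonneg hsorted hsum m D hcard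
end

section
/- Monotonicity of ParentTransitions monitoring: if S ⊆ T ⊆ V and ρ(u,T) < 1 for all u ∈ V, then F_PT(T) ≤ F_PT(S), where F_PT(S) = ∑_{u} x(u) ∑_{v∉S} P(u,v)(1 − P(u,v)/(1−ρ(u,S))). -/
open Finset

lemma pt_key {V : Type*} [Fintype V] [DecidableEq V]
    (p : V → ℝ) (hp0 : ∀ v, 0 ≤ p v) (hp1 : ∀ v, p v ≤ 1)
    (hrow : ∑ v, p v = 1)
    (S T : Finset V) (hST : S ⊆ T) (hT : ∑ v ∈ T, p v < 1) :
    ∑ v ∈ univ \ T, p v * (1 - p v / (1 - ∑ w ∈ T, p w))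
      ≤ ∑ v ∈ univ \ S, p v * (1 - p v / (1 - ∑ w ∈ S, p w)) := by
  set b : ℝ := 1 - ∑ w ∈ T, p w with hbdef
  set a : ℝ := 1 - ∑ w ∈ S, p w with hadef
  set d : ℝ := ∑ v ∈ T \ S, p v with hddef
  have hb : 0 < b := by simp [hbdef]; linarith
  have hd0 : 0 ≤ d := Finset.sum_nonneg fun v _ => hp0 v
  have had : a = b + d := by
    have := Finset.sum_sdiff (f := p) hST
    simp only [hadef, hbdef, hddef]
    linarith
  have ha : 0 < a := by rw [had]; linarith
  have hsumT : ∑ v ∈ univ \ T, p v = b := by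
    have := Finset.sum_sdiff (f := p) (Finset.subset_univ T)
    simp only [hbdef]; linarith [hrow]
  have hsumS : ∑ v ∈ univ \ S, p v = a := by
    have := Finset.sum_sdiff (f := p) (Finset.subset_univ S)
    simp only [hadef]; linarith [hrow]
  have expand : ∀ (A : Finset V) (c : ℝ),
      ∑ v ∈ A, p v * (1 - p v / c) = (∑ v ∈ A, p v) - (∑ v ∈ A, p v ^ 2) / c := by
    intro A c
    rw [Finset.sum_div, ← Finset.sum_sub_distrib]
    refine Finset.sum_congr rfl fun v _ => ?_
    ring
  rw [expand, expand, hsumT, hsumS]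
  set QT : ℝ := ∑ v ∈ univ \ T, p v ^ 2 with hQTdef
  set QS : ℝ := ∑ v ∈ univ \ S, p v ^ 2 with hQSdef
  set E : ℝ := ∑ v ∈ T \ S, p v ^ 2 with hEdef
  have hQT0 : 0 ≤ QT := Finset.sum_nonneg fun v _ => sq_nonneg _
  have hE0 : 0 ≤ E := Finset.sum_nonneg fun v _ => sq_nonneg _
  have hsub : univ \ T ⊆ univ \ S := Finset.sdiff_subset_sdiff (le_refl _) hST
  have hset : (univ \ S) \ (univ \ T) = T \ S := by
    ext v; simp [Finset.mem_sdiff]; tauto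
  have hsplit : QS = QT + E := by
    have := Finset.sum_sdiff (f := fun v => p v ^ 2) hsub
    rw [hset] at this
    simp only [hQSdef, hQTdef, hEdef]
    linarith
  have hE : E ≤ d * d := by
    have h1 : E ≤ ∑ v ∈ T \ S, p v * d := by
      refine Finset.sum_le_sum fun v hv => ?_
      have hpv : p v ≤ d := Finset.single_le_sum (fun w _ => hp0 w) hv
      have := hp0 v
      nlinarith
    have h2 : ∑ v ∈ T \ S, p v * d = d * d := by
      rw [← Finset.sum_mul]
    linarith
  -- goal: b - QT / b ≤ a - QS / a
  rw [hsplit, had]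
  have h1 : 0 < b + d := by linarith
  have h2 : (QT + E) / (b + d) ≤ d + QT / b := by
    rw [div_le_iff₀ h1]
    have hc : QT / b * b = QT := div_mul_cancel₀ _ hb.ne'
    have hq : 0 ≤ QT / b := div_nonneg hQT0 hb.le
    nlinarith [mul_nonneg hq hd0, mul_nonneg hd0 hb.le]
  linarith

theorem parentTransitions_monotone
    {V : Type*} [Fintype V] [DecidableEq V]
    (x : V → ℝ) (hx : ∀ u, 0 ≤ x u)
    (P : V → V → ℝ) (hP0 : ∀ u v, 0 ≤ P u v) (hP1 : ∀ u v, P u v ≤ 1)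
    (hrow : ∀ u, ∑ v, P u v = 1)
    (S T : Finset V) (hST : S ⊆ T) (hρ : ∀ u, ∑ v ∈ T, P u v < 1) :
    ∑ u, x u * ∑ v ∈ univ \ T, P u v * (1 - P u v / (1 - ∑ w ∈ T, P u w))
      ≤ ∑ u, x u * ∑ v ∈ univ \ S, P u v * (1 - P u v / (1 - ∑ w ∈ S, P u w)) := by
  refine Finset.sum_le_sum fun u _ => ?_
  exact mul_le_mul_of_nonneg_left
    (pt_key (P u) (hP0 u) (hP1 u) (hrow u) S T hST (hρ u)) (hx u)
end

section
/- Monotonicity of EdgeTransitions monitoring: if D ⊆ D' ⊆ V×V and ρ(u,D') < 1 for all u, then F_ET(D') ≤ F_ET(D), where F_ET(D) = ∑_{u} x(u) ∑_{(u,v)∉D} P(u,v)(1 − P(u,v)/(1−ρ(u,D))) and ρ(u,D) is the total probability of edges in D leaving u. -/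
open Finset

lemma key_mono {ι : Type*} [DecidableEq ι] (A' A : Finset ι) (hAA : A' ⊆ A)
    (p : ι → ℝ) (hp : ∀ i, 0 ≤ p i) (hT' : 0 < ∑ i ∈ A', p i) :
    ∑ i ∈ A', p i * (1 - p i / ∑ j ∈ A', p j)
      ≤ ∑ i ∈ A, p i * (1 - p i / ∑ j ∈ A, p j) := by
  set T' := ∑ j ∈ A', p j with hT'def
  set T := ∑ j ∈ A, p j with hTdef
  have hTT' : T' ≤ T := sum_le_sum_of_subset_of_nonneg hAA (fun i _ _ => hp i)
  have hT : 0 < T := lt_of_lt_of_le hT' hTT'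
  set Q' := ∑ i ∈ A', p i ^ 2 with hQ'def
  set Q := ∑ i ∈ A, p i ^ 2 with hQdef
  have hQ' : 0 ≤ Q' := sum_nonneg fun i _ => sq_nonneg _
  have hQQ' : Q' ≤ Q := sum_le_sum_of_subset_of_nonneg hAA (fun i _ _ => sq_nonneg _)
  set R := ∑ i ∈ A \ A', p i with hRdef
  set S := ∑ i ∈ A \ A', p i ^ 2 with hSdef
  have hR : 0 ≤ R := sum_nonneg fun i _ => hp i
  have hTR : T = T' + R := by
    have := Finset.sum_sdiff (f := p) hAA
    rw [hTdef, hT'def, hRdef]; linarith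
  have hQS : Q = Q' + S := by
    have := Finset.sum_sdiff (f := fun i => p i ^ 2) hAA
    rw [hQdef, hQ'def, hSdef]; linarith
  have hSR : S ≤ R ^ 2 := by
    calc S ≤ ∑ i ∈ A \ A', p i * R := by
            apply sum_le_sum
            intro i hi
            rw [sq]
            exact mul_le_mul_of_nonneg_left
              (Finset.single_le_sum (fun j _ => hp j) hi) (hp i)
      _ = R ^ 2 := by rw [← Finset.sum_mul, sq]
  have hL : ∑ i ∈ A', p i * (1 - p i / T') = T' - Q' / T' := by
    rw [eq_sub_iff_add_eq, hQ'def, Finset.sum_div, ← Finset.sum_add_distrib]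
    rw [hT'def]
    apply Finset.sum_congr rfl
    intro i _
    field_simp
    ring
  have hRr : ∑ i ∈ A, p i * (1 - p i / T) = T - Q / T := by
    rw [eq_sub_iff_add_eq, hQdef, Finset.sum_div, ← Finset.sum_add_distrib]
    rw [hTdef]
    apply Finset.sum_congr rfl
    intro i _
    field_simp
    ring
  rw [hL, hRr]
  have h1 : Q / T - Q' / T' ≤ T - T' := by
    rw [div_sub_div _ _ hT.ne' hT'.ne', div_le_iff₀ (by positivity)]
    have e1 : Q * T' - T * Q' = S * T' - R * Q' := by rw [hQS, hTR]; ring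
    have e2 : (T - T') * (T * T') = R * T' ^ 2 + R ^ 2 * T' := by rw [hTR]; ring
    have h2 : S * T' ≤ R ^ 2 * T' := mul_le_mul_of_nonneg_right hSR hT'.le
    have h3 : 0 ≤ R * Q' := mul_nonneg hR hQ'
    have h4 : 0 ≤ R * T' ^ 2 := mul_nonneg hR (sq_nonneg T')
    linarith
  linarith

theorem edgeTransitions_monotone
    {V : Type*} [Fintype V] [DecidableEq V]
    (x : V → ℝ) (hx : ∀ u, 0 ≤ x u)
    (P : V → V → ℝ) (hP0 : ∀ u v, 0 ≤ P u v) (hP1 : ∀ u v, P u v ≤ 1)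
    (hrow : ∀ u, ∑ v, P u v = 1)
    (D D' : Finset (V × V)) (hDD' : D ⊆ D')
    (hρ : ∀ u, ∑ v ∈ univ.filter (fun v => (u, v) ∈ D'), P u v < 1) :
    ∑ u, x u * ∑ v ∈ univ.filter (fun v => (u, v) ∉ D'),
        P u v * (1 - P u v / (1 - ∑ w ∈ univ.filter (fun w => (u, w) ∈ D'), P u w))
      ≤ ∑ u, x u * ∑ v ∈ univ.filter (fun v => (u, v) ∉ D),
        P u v * (1 - P u v / (1 - ∑ w ∈ univ.filter (fun w => (u, w) ∈ D), P u w)) := by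
  apply Finset.sum_le_sum
  intro u _
  apply mul_le_mul_of_nonneg_left _ (hx u)
  have hcomp : ∀ (E : Finset (V × V)),
      1 - ∑ w ∈ univ.filter (fun w => (u, w) ∈ E), P u w
        = ∑ w ∈ univ.filter (fun w => (u, w) ∉ E), P u w := by
    intro E
    have := Finset.sum_filter_add_sum_filter_not Finset.univ
      (fun w => (u, w) ∈ E) (fun w => P u w)
    rw [← hrow u]
    linarith [this]
  rw [hcomp D, hcomp D']
  have hsub : univ.filter (fun v => (u, v) ∉ D') ⊆ univ.filter (fun v => (u, v) ∉ D) := by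
    intro v hv
    simp only [mem_filter, mem_univ, true_and] at *
    exact fun h => hv (hDD' h)
  have hpos : 0 < ∑ w ∈ univ.filter (fun w => (u, w) ∉ D'), P u w := by
    have := hρ u
    rw [← hcomp D']
    linarith
  exact key_mono _ _ hsub _ (fun i => hP0 u i) hpos
end

section
/- Let p₁ ≥ p₂ ≥ ... ≥ p_n ≥ 0 with ∑ p_i = 1 and fix 0 ≤ m < n with ∑_{i≤m} p_i < 1. Define h(D) = (1 − ρ(D)) − (∑_{i∉D} p_i²)/(1 − ρ(D)) for D ⊆ {1,...,n}, |D| = m, ρ(D) = ∑_{i∈D} p_i < 1. Then h({1,...,m}) ≤ h(D) for every such D. -/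
open Finset

lemma swap_ineq (r S pi pj : ℝ) (hd : pi ≤ pj) (hr : 0 < r)
    (hr' : 0 < r - pj + pi) (hS : pj ^ 2 ≤ S) :
    (r - pj + pi) - (S - pj ^ 2 + pi ^ 2) / (r - pj + pi) ≤ r - S / r := by
  have key : 0 ≤ (pj - pi) * ((r - pj) ^ 2 + (S - pj ^ 2)) :=
    mul_nonneg (by linarith) (by nlinarith [sq_nonneg (r - pj)])
  have hne : r ≠ 0 := hr.ne'
  have hne' : r - pj + pi ≠ 0 := hr'.ne'
  have hid : (r - S / r) - ((r - pj + pi) - (S - pj ^ 2 + pi ^ 2) / (r - pj + pi))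
      = ((pj - pi) * ((r - pj) ^ 2 + (S - pj ^ 2))) / (r * (r - pj + pi)) := by
    field_simp
    ring
  have := div_nonneg key (mul_pos hr hr').le
  linarith [hid ▸ this]

theorem top_m_minimizes_residual {n : ℕ} (p : Fin n → ℝ)
    (hnonneg : ∀ i, 0 ≤ p i)
    (hsorted : ∀ i j : Fin n, i ≤ j → p j ≤ p i)
    (hsum : ∑ i, p i = 1)
    (m : ℕ) (hm : m < n)
    (htop : ∑ i ∈ univ.filter (fun i : Fin n => (i : ℕ) < m), p i < 1)
    (D : Finset (Fin n)) (hcard : D.card = m) (hρ : ∑ i ∈ D, p i < 1) :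
    (1 - ∑ i ∈ univ.filter (fun i : Fin n => (i : ℕ) < m), p i) -
        (∑ i ∈ univ.filter (fun i : Fin n => ¬ (i : ℕ) < m), (p i) ^ 2) /
          (1 - ∑ i ∈ univ.filter (fun i : Fin n => (i : ℕ) < m), p i)
      ≤ (1 - ∑ i ∈ D, p i) -
          (∑ i ∈ univ \ D, (p i) ^ 2) / (1 - ∑ i ∈ D, p i) := by
  classical
  set T := univ.filter (fun i : Fin n => (i : ℕ) < m) with hT
  have hfilter' : univ.filter (fun i : Fin n => ¬ (i : ℕ) < m) = univ \ T := by
    rw [Finset.filter_not, ← hT]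
  rw [hfilter']
  have hTcard : T.card = m := by
    have h1 : T = (Finset.range m).attachFin (fun x hx => (mem_range.mp hx).trans hm) := by
      ext i; simp [hT, Finset.mem_attachFin]
    rw [h1, Finset.card_attachFin, Finset.card_range]
  -- L1: T maximizes the sum among m-element sets
  have L1 : ∀ (E : Finset (Fin n)), E.card = m → ∑ i ∈ E, p i ≤ ∑ i ∈ T, p i := by
    have key : ∀ k (E : Finset (Fin n)), E.card = m → (E \ T).card = k →
        ∑ i ∈ E, p i ≤ ∑ i ∈ T, p i := by
      intro k
      induction k with
      | zero =>
        intro E hE h0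
        have hsub : E ⊆ T := by
          rw [← sdiff_eq_empty_iff_subset]; exact card_eq_zero.mp h0
        have hET : E = T := eq_of_subset_of_card_le hsub (by rw [hTcard, hE])
        rw [hET]
      | succ k ih =>
        intro E hE hk
        obtain ⟨i, hiE⟩ := card_pos.mp (by rw [hk]; exact k.succ_pos)
        have hiE' := mem_sdiff.mp hiE
        have hTEne : (T \ E).Nonempty := by
          rw [← card_pos]
          by_contra h
          push_neg at h
          have h1 : T ⊆ E := sdiff_eq_empty_iff_subset.mp (card_eq_zero.mp (Nat.le_zero.mp h))
          have h2 : T = E := eq_of_subset_of_card_le h1 (by rw [hE, hTcard])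
          rw [← h2] at hk; simp at hk
        obtain ⟨j, hjT⟩ := hTEne
        have hjT' := mem_sdiff.mp hjT
        have hij : p i ≤ p j := by
          apply hsorted
          have h1 : (j : ℕ) < m := by simpa [hT] using hjT'.1
          have h2 : ¬ (i : ℕ) < m := by simpa [hT] using hiE'.2
          exact Fin.le_def.mpr (by omega)
        have hjE : j ∉ E.erase i := fun h => hjT'.2 (mem_of_mem_erase h)
        have hE'card : (insert j (E.erase i)).card = m := by
          rw [card_insert_of_notMem hjE, card_erase_of_mem hiE'.1, hE]
          have h1 : 1 ≤ m := by rw [← hE]; exact card_pos.mpr ⟨i, hiE'.1⟩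
          omega
        have hE'sdiff : (insert j (E.erase i) \ T).card = k := by
          have heq : insert j (E.erase i) \ T = (E \ T).erase i := by
            ext x
            simp only [mem_sdiff, mem_insert, mem_erase]
            constructor
            · rintro ⟨hx1 | ⟨hx2, hx3⟩, hx4⟩
              · exact absurd (hx1 ▸ hjT'.1) hx4
              · exact ⟨hx2, hx3, hx4⟩
            · rintro ⟨hx1, hx2, hx3⟩
              exact ⟨Or.inr ⟨hx1, hx2⟩, hx3⟩
          rw [heq, card_erase_of_mem hiE, hk]; omega
        have hsumE' : ∑ x ∈ insert j (E.erase i), p x = ∑ x ∈ E, p x - p i + p j := by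
          rw [sum_insert hjE, sum_erase_eq_sub hiE'.1]; ring
        have h2 := ih (insert j (E.erase i)) hE'card hE'sdiff
        rw [hsumE'] at h2
        linarith
    intro E hE; exact key _ E hE rfl
  -- main induction
  have main : ∀ k (E : Finset (Fin n)), E.card = m → ∑ i ∈ E, p i < 1 → (E \ T).card = k →
      (1 - ∑ i ∈ T, p i) - (∑ i ∈ univ \ T, p i ^ 2) / (1 - ∑ i ∈ T, p i)
        ≤ (1 - ∑ i ∈ E, p i) - (∑ i ∈ univ \ E, p i ^ 2) / (1 - ∑ i ∈ E, p i) := by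
    intro k
    induction k with
    | zero =>
      intro E hE _ h0
      have hsub : E ⊆ T := by
        rw [← sdiff_eq_empty_iff_subset]; exact card_eq_zero.mp h0
      have hET : E = T := eq_of_subset_of_card_le hsub (by rw [hTcard, hE])
      rw [hET]
    | succ k ih =>
      intro E hE hElt hk
      obtain ⟨i, hiE⟩ := card_pos.mp (by rw [hk]; exact k.succ_pos)
      have hiE' := mem_sdiff.mp hiE
      have hTEne : (T \ E).Nonempty := by
        rw [← card_pos]
        by_contra h
        push_neg at h
        have h1 : T ⊆ E := sdiff_eq_empty_iff_subset.mp (card_eq_zero.mp (Nat.le_zero.mp h))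
        have h2 : T = E := eq_of_subset_of_card_le h1 (by rw [hE, hTcard])
        rw [← h2] at hk; simp at hk
      obtain ⟨j, hjT⟩ := hTEne
      have hjT' := mem_sdiff.mp hjT
      have hij : p i ≤ p j := by
        apply hsorted
        have h1 : (j : ℕ) < m := by simpa [hT] using hjT'.1
        have h2 : ¬ (i : ℕ) < m := by simpa [hT] using hiE'.2
        exact Fin.le_def.mpr (by omega)
      have hjE : j ∉ E.erase i := fun h => hjT'.2 (mem_of_mem_erase h)
      set E' := insert j (E.erase i) with hE'def
      have hE'card : E'.card = m := by
        rw [hE'def, card_insert_of_notMem hjE, card_erase_of_mem hiE'.1, hE]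
        have h1 : 1 ≤ m := by rw [← hE]; exact card_pos.mpr ⟨i, hiE'.1⟩
        omega
      have hE'sdiff : (E' \ T).card = k := by
        have heq : E' \ T = (E \ T).erase i := by
          ext x
          simp only [hE'def, mem_sdiff, mem_insert, mem_erase]
          constructor
          · rintro ⟨hx1 | ⟨hx2, hx3⟩, hx4⟩
            · exact absurd (hx1 ▸ hjT'.1) hx4
            · exact ⟨hx2, hx3, hx4⟩
          · rintro ⟨hx1, hx2, hx3⟩
            exact ⟨Or.inr ⟨hx1, hx2⟩, hx3⟩
        rw [heq, card_erase_of_mem hiE, hk]; omega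
      have hsumE' : ∑ x ∈ E', p x = ∑ x ∈ E, p x - p i + p j := by
        rw [hE'def, sum_insert hjE, sum_erase_eq_sub hiE'.1]; ring
      have hE'lt : ∑ x ∈ E', p x < 1 := lt_of_le_of_lt (L1 E' hE'card) htop
      have hS' : ∑ x ∈ univ \ E', p x ^ 2 = ∑ x ∈ univ \ E, p x ^ 2 - p j ^ 2 + p i ^ 2 := by
        rw [sum_sdiff_eq_sub (subset_univ _), sum_sdiff_eq_sub (subset_univ _), hE'def,
          sum_insert hjE, sum_erase_eq_sub hiE'.1]
        ring
      have hS : p j ^ 2 ≤ ∑ x ∈ univ \ E, p x ^ 2 :=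
        single_le_sum (f := fun x => p x ^ 2) (fun x _ => sq_nonneg (p x))
          (mem_sdiff.mpr ⟨mem_univ j, hjT'.2⟩)
      have hswap := swap_ineq (1 - ∑ x ∈ E, p x) (∑ x ∈ univ \ E, p x ^ 2) (p i) (p j)
        hij (by linarith) (by rw [hsumE'] at hE'lt; linarith) hS
      have heq1 : 1 - ∑ x ∈ E', p x = (1 - ∑ x ∈ E, p x) - p j + p i := by
        rw [hsumE']; ring
      calc (1 - ∑ i ∈ T, p i) - (∑ i ∈ univ \ T, p i ^ 2) / (1 - ∑ i ∈ T, p i)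
          ≤ (1 - ∑ x ∈ E', p x) - (∑ x ∈ univ \ E', p x ^ 2) / (1 - ∑ x ∈ E', p x) :=
            ih E' hE'card hE'lt hE'sdiff
        _ ≤ (1 - ∑ i ∈ E, p i) - (∑ i ∈ univ \ E, p i ^ 2) / (1 - ∑ i ∈ E, p i) := by
            rw [heq1, hS']; exact hswap
  exact main (D \ T).card D hcard hρ rfl
end

section
/- Exchange inequality: let p, q, and a finite multiset C of nonnegative reals be given with p ≤ q, and let S = ∑_{c∈C} c, SS = ∑_{c∈C} c², with S + p > 0 and S + q > 0. Then (S + p) − (SS + p²)/(S + p) ≤ (S + q) − (SS + q²)/(S + q), i.e., the function t ↦ (S + t) − (SS + t²)/(S + t) is nondecreasing in t ≥ 0. -/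
theorem exchange_inequality (p q : ℝ) (hp : 0 ≤ p) (hq : 0 ≤ q) (hpq : p ≤ q)
    (C : Multiset ℝ) (hC : ∀ c ∈ C, 0 ≤ c)
    (hSp : 0 < C.sum + p) (hSq : 0 < C.sum + q) :
    (C.sum + p) - ((C.map (fun c => c ^ 2)).sum + p ^ 2) / (C.sum + p)
      ≤ (C.sum + q) - ((C.map (fun c => c ^ 2)).sum + q ^ 2) / (C.sum + q) := by
  have hSS : 0 ≤ (C.map (fun c => c ^ 2)).sum := by
    apply Multiset.sum_nonneg
    intro x hx
    obtain ⟨c, _, rfl⟩ := Multiset.mem_map.mp hx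
    positivity
  set S := C.sum with hS
  set SS := (C.map (fun c => c ^ 2)).sum with hSSdef
  have e1 : S + p - (SS + p ^ 2) / (S + p) = ((S + p) ^ 2 - (SS + p ^ 2)) / (S + p) := by
    field_simp
  have e2 : S + q - (SS + q ^ 2) / (S + q) = ((S + q) ^ 2 - (SS + q ^ 2)) / (S + q) := by
    field_simp
  rw [e1, e2, div_le_div_iff₀ hSp hSq]
  nlinarith [mul_nonneg (sub_nonneg.mpr hpq) (sq_nonneg S),
    mul_nonneg (sub_nonneg.mpr hpq) hSS]
end

section
/- Additivity of the EdgeTransitions objective over source nodes: F_ET(D) = ∑_{u∈V} x(u) · h_u(D_u), where D_u = {v : (u,v) ∈ D}, ρ_u = ∑_{v∈D_u} P(u,v) < 1, and h_u(D_u) = (1−ρ_u) − (∑_{v∉D_u} P(u,v)²)/(1−ρ_u). Consequently, for a fixed allocation (m_u)_{u∈V} of monitored out-edges per node with ∑ m_u = k, the optimal D with |D_u| = m_u is obtained by independently choosing for each node u its m_u largest-probability out-edges. -/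
/-!
Writing `t = ∑_{v ∉ D_u} P(u,v) = 1 - ρ_u`, the contribution of node `u` is
`x(u) · t · ∑_{v ∉ D_u} (P/t)(1 - P/t) = x(u) · (t - ∑ P²/t)`, which depends on `D_u` only.
For optimality it therefore suffices to compare single nodes: `t - q/t` (with `q` the sum of
squares over the unmonitored set) does not decrease when an unmonitored weight is replaced by a
larger one, and the unmonitored set of a top-probability choice is reached from any other
unmonitored set of the same size by such exchanges.
-/

open Finset

section MassGini

variable {ι : Type*} (w : ι → ℝ)

/-- The mass `t` of `w` on `T` times the Gini impurity `1 - ∑ (w v / t)²` of its normalisation;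
for `w = P u` and `T` the unmonitored out-neighbours of `u` this is the paper's `h_u`. -/
noncomputable def massGini (T : Finset ι) : ℝ :=
  (∑ v ∈ T, w v) - (∑ v ∈ T, w v ^ 2) / ∑ v ∈ T, w v

theorem sum_mul_sum_div_mul_one_sub_div (T : Finset ι) (hT : ∑ v ∈ T, w v ≠ 0) :
    (∑ v ∈ T, w v) * ∑ v ∈ T, (w v / ∑ u ∈ T, w u) * (1 - w v / ∑ u ∈ T, w u)
      = massGini w T := by
  rw [massGini, mul_sum, sum_div, ← sum_sub_distrib]
  refine sum_congr rfl fun v _ => ?_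
  field_simp

theorem sum_insert_erase_eq [DecidableEq ι] {a b : ι} {T : Finset ι} (ha : a ∈ T) (hb : b ∉ T)
    (f : ι → ℝ) :
    ∑ v ∈ insert b (T.erase a), f v = ∑ v ∈ T, f v - f a + f b := by
  rw [sum_insert fun h => hb (mem_of_mem_erase h), sum_erase_eq_sub ha]
  ring

theorem massGini_le_massGini_insert_erase [DecidableEq ι] {a b : ι} {T : Finset ι} (ha : a ∈ T)
    (hb : b ∉ T) (hab : w a ≤ w b) (hT : 0 < ∑ v ∈ T, w v) :
    massGini w T ≤ massGini w (insert b (T.erase a)) := by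
  simp only [massGini, sum_insert_erase_eq ha hb]
  set t := ∑ v ∈ T, w v
  set q := ∑ v ∈ T, w v ^ 2
  have hq : w a ^ 2 ≤ q := single_le_sum (f := fun v => w v ^ 2) (fun v _ => sq_nonneg _) ha
  have ht' : 0 < t - w a + w b := by linarith
  have hdiff : (t - w a + w b - (q - w a ^ 2 + w b ^ 2) / (t - w a + w b)) - (t - q / t)
      = (w b - w a) * ((t - w a) ^ 2 + (q - w a ^ 2)) / (t * (t - w a + w b)) := by
    field_simp
    ring
  have hnonneg : 0 ≤ (w b - w a) * ((t - w a) ^ 2 + (q - w a ^ 2)) / (t * (t - w a + w b)) :=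
    div_nonneg (mul_nonneg (sub_nonneg.2 hab) (add_nonneg (sq_nonneg _) (sub_nonneg.2 hq)))
      (mul_pos hT ht').le
  linarith

theorem massGini_le_massGini_of_exchange [DecidableEq ι] {L T : Finset ι} (hcard : #L = #T)
    (hexch : ∀ a ∈ L \ T, ∀ b ∈ T \ L, w a ≤ w b) (hL : 0 < ∑ v ∈ L, w v) :
    massGini w L ≤ massGini w T := by
  induction hn : #(L \ T) generalizing L with
  | zero =>
    rw [eq_of_subset_of_card_le (sdiff_eq_empty_iff_subset.1 (card_eq_zero.1 hn)) hcard.ge]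
  | succ n ih =>
    obtain ⟨a, haL⟩ : (L \ T).Nonempty := card_pos.1 (by omega)
    obtain ⟨b, hbT⟩ : (T \ L).Nonempty := card_pos.1 (by rw [← card_sdiff_comm hcard]; omega)
    rw [mem_sdiff] at haL hbT
    have hb : b ∉ L.erase a := fun h => hbT.2 (mem_of_mem_erase h)
    have hdiff : insert b (L.erase a) \ T = (L \ T).erase a := by
      ext v
      simp only [mem_sdiff, mem_insert, mem_erase]
      constructor
      · rintro ⟨rfl | hv, hvT⟩
        exacts [absurd hbT.1 hvT, ⟨hv.1, hv.2, hvT⟩]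
      · rintro ⟨hva, hvL, hvT⟩
        exact ⟨Or.inr ⟨hva, hvL⟩, hvT⟩
    have hdiff' : T \ insert b (L.erase a) ⊆ T \ L := by
      intro v hv
      simp only [mem_sdiff, mem_insert, mem_erase, not_or, not_and_or, not_not] at hv ⊢
      rcases hv with ⟨hvT, -, rfl | hvL⟩
      exacts [absurd hvT haL.2, ⟨hvT, hvL⟩]
    refine (massGini_le_massGini_insert_erase w haL.1 hbT.2
      (hexch a (mem_sdiff.2 haL) b (mem_sdiff.2 hbT)) hL).trans (ih ?_ ?_ ?_ ?_)
    · rw [card_insert_of_notMem hb, card_erase_of_mem haL.1, ← hcard]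
      have := card_pos.2 ⟨a, haL.1⟩
      omega
    · rw [hdiff]
      exact fun a' ha' b' hb' => hexch a' (mem_of_mem_erase ha') b' (hdiff' hb')
    · rw [sum_insert_erase_eq haL.1 hbT.2]
      linarith [hexch a (mem_sdiff.2 haL) b (mem_sdiff.2 hbT)]
    · rw [hdiff, card_erase_of_mem (mem_sdiff.2 haL), hn]
      rfl

end MassGini

section Row

variable {ι : Type*} [Fintype ι] {w : ι → ℝ} (hw : ∑ v, w v = 1) (p : ι → Prop) [DecidablePred p]
include hw

theorem one_sub_sum_filter_eq_sum_filter_not :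
    1 - ∑ v with p v, w v = ∑ v with ¬p v, w v := by
  rw [← hw, ← sum_filter_add_sum_filter_not univ p]
  ring

theorem one_sub_sum_filter_mul_eq_massGini (hp : ∑ v with p v, w v < 1) :
    (1 - ∑ v with p v, w v) * ∑ v with ¬p v,
        (w v / (1 - ∑ u with p u, w u)) * (1 - w v / (1 - ∑ u with p u, w u))
      = massGini w {v | ¬p v} := by
  rw [← sub_pos, one_sub_sum_filter_eq_sum_filter_not hw] at hp
  rw [one_sub_sum_filter_eq_sum_filter_not hw, sum_mul_sum_div_mul_one_sub_div _ _ hp.ne']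

end Row

theorem edgeTransitions_separable_general
    {V : Type*} [Fintype V] [DecidableEq V]
    (x : V → ℝ) (hx : ∀ u, 0 ≤ x u)
    (P : V → V → ℝ)
    (hrow : ∀ u, ∑ v, P u v = 1)
    (D : Finset (V × V))
    (hρ : ∀ u, ∑ v ∈ univ.filter (fun v => (u, v) ∈ D), P u v < 1) :
    -- additivity over source nodes
    (∑ u, x u * (1 - ∑ v ∈ univ.filter (fun v => (u, v) ∈ D), P u v) *
        ∑ v ∈ univ.filter (fun v => (u, v) ∉ D),
          (P u v / (1 - ∑ w ∈ univ.filter (fun w => (u, w) ∈ D), P u w)) *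
            (1 - P u v / (1 - ∑ w ∈ univ.filter (fun w => (u, w) ∈ D), P u w))
      = ∑ u, x u *
          ((1 - ∑ v ∈ univ.filter (fun v => (u, v) ∈ D), P u v) -
            (∑ v ∈ univ.filter (fun v => (u, v) ∉ D), (P u v) ^ 2) /
              (1 - ∑ v ∈ univ.filter (fun v => (u, v) ∈ D), P u v))) ∧
    -- per-node largest probabilities are optimal for a fixed allocation
    (∀ D' : Finset (V × V),
      (∀ u, ∑ v ∈ univ.filter (fun v => (u, v) ∈ D'), P u v < 1) →
      (∀ u, (univ.filter (fun v => (u, v) ∈ D')).card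
              = (univ.filter (fun v => (u, v) ∈ D)).card) →
      (∀ u, ∀ v ∈ univ.filter (fun v => (u, v) ∈ D'),
        ∀ w ∈ univ.filter (fun w => (u, w) ∉ D'), P u w ≤ P u v) →
      ∑ u, x u * (1 - ∑ v ∈ univ.filter (fun v => (u, v) ∈ D'), P u v) *
          ∑ v ∈ univ.filter (fun v => (u, v) ∉ D'),
            (P u v / (1 - ∑ w ∈ univ.filter (fun w => (u, w) ∈ D'), P u w)) *
              (1 - P u v / (1 - ∑ w ∈ univ.filter (fun w => (u, w) ∈ D'), P u w))
        ≤ ∑ u, x u * (1 - ∑ v ∈ univ.filter (fun v => (u, v) ∈ D), P u v) *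
            ∑ v ∈ univ.filter (fun v => (u, v) ∉ D),
              (P u v / (1 - ∑ w ∈ univ.filter (fun w => (u, w) ∈ D), P u w)) *
                (1 - P u v / (1 - ∑ w ∈ univ.filter (fun w => (u, w) ∈ D), P u w))) := by
  refine ⟨sum_congr rfl fun u _ => ?_, fun D' hρ' hcard htop => sum_le_sum fun u _ => ?_⟩
  · rw [mul_assoc, one_sub_sum_filter_mul_eq_massGini (hrow u) _ (hρ u), massGini,
      one_sub_sum_filter_eq_sum_filter_not (hrow u)]
  · rw [mul_assoc, mul_assoc, one_sub_sum_filter_mul_eq_massGini (hrow u) _ (hρ u),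
      one_sub_sum_filter_mul_eq_massGini (hrow u) _ (hρ' u)]
    refine mul_le_mul_of_nonneg_left (massGini_le_massGini_of_exchange (P u) ?_ ?_ ?_) (hx u)
    · have := card_filter_add_card_filter_not (s := univ) (fun v => (u, v) ∈ D)
      have := card_filter_add_card_filter_not (s := univ) (fun v => (u, v) ∈ D')
      have := hcard u
      omega
    · intro a ha b hb
      simp only [mem_sdiff, mem_filter, mem_univ, true_and, not_not] at ha hb
      exact htop u b (by simp [hb.2]) a (by simp [ha.1])
    · rw [← one_sub_sum_filter_eq_sum_filter_not (hrow u)]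
      exact sub_pos.2 (hρ' u)

theorem edgeTransitions_separable
    {V : Type*} [Fintype V] [DecidableEq V]
    (x : V → ℝ) (hx : ∀ u, 0 ≤ x u)
    (P : V → V → ℝ) (hP0 : ∀ u v, 0 ≤ P u v) (hP1 : ∀ u v, P u v ≤ 1)
    (hrow : ∀ u, ∑ v, P u v = 1)
    (D : Finset (V × V))
    (hρ : ∀ u, ∑ v ∈ univ.filter (fun v => (u, v) ∈ D), P u v < 1) :
    -- additivity over source nodes
    (∑ u, x u * (1 - ∑ v ∈ univ.filter (fun v => (u, v) ∈ D), P u v) *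
        ∑ v ∈ univ.filter (fun v => (u, v) ∉ D),
          (P u v / (1 - ∑ w ∈ univ.filter (fun w => (u, w) ∈ D), P u w)) *
            (1 - P u v / (1 - ∑ w ∈ univ.filter (fun w => (u, w) ∈ D), P u w))
      = ∑ u, x u *
          ((1 - ∑ v ∈ univ.filter (fun v => (u, v) ∈ D), P u v) -
            (∑ v ∈ univ.filter (fun v => (u, v) ∉ D), (P u v) ^ 2) /
              (1 - ∑ v ∈ univ.filter (fun v => (u, v) ∈ D), P u v))) ∧
    -- per-node largest probabilities are optimal for a fixed allocation
    (∀ D' : Finset (V × V),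
      (∀ u, ∑ v ∈ univ.filter (fun v => (u, v) ∈ D'), P u v < 1) →
      (∀ u, (univ.filter (fun v => (u, v) ∈ D')).card
              = (univ.filter (fun v => (u, v) ∈ D)).card) →
      (∀ u, ∀ v ∈ univ.filter (fun v => (u, v) ∈ D'),
        ∀ w ∈ univ.filter (fun w => (u, w) ∉ D'), P u w ≤ P u v) →
      ∑ u, x u * (1 - ∑ v ∈ univ.filter (fun v => (u, v) ∈ D'), P u v) *
          ∑ v ∈ univ.filter (fun v => (u, v) ∉ D'),
            (P u v / (1 - ∑ w ∈ univ.filter (fun w => (u, w) ∈ D'), P u w)) *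
              (1 - P u v / (1 - ∑ w ∈ univ.filter (fun w => (u, w) ∈ D'), P u w))
        ≤ ∑ u, x u * (1 - ∑ v ∈ univ.filter (fun v => (u, v) ∈ D), P u v) *
            ∑ v ∈ univ.filter (fun v => (u, v) ∉ D),
              (P u v / (1 - ∑ w ∈ univ.filter (fun w => (u, w) ∈ D), P u w)) *
                (1 - P u v / (1 - ∑ w ∈ univ.filter (fun w => (u, w) ∈ D), P u w))) :=
  edgeTransitions_separable_general x hx P hrow D hρ
end
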